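/- arXiv:1401.8043 — 2 statements merged into one kernel-verified Lean document; each statement's English description precedes it below -/
import Mathlib

section
/- Let d ≥ 1 be an integer, 1 < p < ∞, and let q = p/(p−1) be the dual exponent. Let a, b ∈ ℝ satisfy a + b > 0. Suppose there is a constant M > 0 such that for every measurable φ : ℝ^d → [0, ∞) with φ ∈ L^p(ℝ^d), the function (Kφ)(x) := ∫_{ℝ^d} φ(y) / (|x|^a |x−y|^{d−(a+b)} |y|^b) dy satisfies ‖Kφ‖_{L^p} ≤ M ‖φ‖_{L^p}. Then necessarily a < d/p and b < d/q. -/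
/-!
Both conditions are tested on two separated shells, `{2 ≤ |y| ≤ 3}` and `{e^{-u} ≤ |y| ≤ 1}`:
for `x` in one and `y` in the other, `1 ≤ |x - y| ≤ 4`, so the middle factor of the kernel is
bounded above and below and only the weights `|x|^{-a}`, `|y|^{-b}` matter.

If `φ` is the indicator of the outer shell, then `Kφ(x) ≳ |x|^{-a}` near `0`, and `|x|^{-ap}` is
not integrable near `0` when `ap ≥ d`: on the inner shell its integral is at least
`∫ |x|^{-d} = σ_d u` (where `σ_d = d |B_1|`), which is unbounded in `u`.

If `φ = |y|^{-d/p}` on the inner shell, then `‖φ‖_p^p = σ_d u`, while for `x` in the outer shell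
`Kφ(x) ≳ ∫ |y|^{-d/p-b} ≥ ∫ |y|^{-d} = σ_d u` when `b ≥ d/q`. Boundedness would then give
`u ≲ u^{1/p}` for all `u > 0`, which fails as `u → ∞`.
-/

open MeasureTheory Metric Set Filter Topology Module
open scoped ENNReal

noncomputable section

section Annulus

variable {E : Type*} [NormedAddCommGroup E]

def closedAnnulus (r R : ℝ) : Set E := norm ⁻¹' Icc r R

variable {r R : ℝ}

lemma isClosed_closedAnnulus : IsClosed (closedAnnulus (E := E) r R) :=
  isClosed_Icc.preimage continuous_norm

lemma norm_pos_of_mem_closedAnnulus (hr : 0 < r) {x : E} (hx : x ∈ closedAnnulus r R) :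
    0 < ‖x‖ :=
  hr.trans_le hx.1

lemma continuousOn_norm_rpow_closedAnnulus (hr : 0 < r) (s : ℝ) :
    ContinuousOn (fun x : E => ‖x‖ ^ s) (closedAnnulus r R) :=
  continuous_norm.continuousOn.rpow_const fun _ hx => Or.inl (norm_pos_of_mem_closedAnnulus hr hx).ne'

variable [NormedSpace ℝ E] [FiniteDimensional ℝ E]

lemma isCompact_closedAnnulus : IsCompact (closedAnnulus (E := E) r R) :=
  (isCompact_closedBall 0 R).of_isClosed_subset isClosed_closedAnnulus
    fun _ hx => mem_closedBall_zero_iff.2 hx.2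

variable [MeasurableSpace E] (μ : Measure E) [μ.IsAddHaarMeasure]

lemma measureReal_closedAnnulus_pos [Nontrivial E] (hr : 0 ≤ r) (hrR : r < R) :
    0 < μ.real (closedAnnulus r R) := by
  obtain ⟨x, hx⟩ := exists_norm_eq E (c := (r + R) / 2) (by linarith)
  have hopen : IsOpen (norm ⁻¹' Ioo r R : Set E) := isOpen_Ioo.preimage continuous_norm
  have hx_mem : x ∈ (norm ⁻¹' Ioo r R : Set E) := by
    simp only [mem_preimage, mem_Ioo, hx]
    constructor <;> linarith
  exact ENNReal.toReal_pos ((hopen.measure_pos μ ⟨x, hx_mem⟩).trans_le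
    (measure_mono (preimage_mono Ioo_subset_Icc_self))).ne'
    isCompact_closedAnnulus.measure_lt_top.ne

lemma finrank_mul_measureReal_ball_pos [Nontrivial E] :
    0 < finrank ℝ E * μ.real (ball (0 : E) 1) :=
  mul_pos (by exact_mod_cast finrank_pos)
    (ENNReal.toReal_pos (measure_ball_pos μ 0 one_pos).ne' measure_ball_lt_top.ne)

variable [BorelSpace E]

lemma integral_closedAnnulus_norm_rpow_neg_finrank [Nontrivial E] (hr : 0 < r) (hrR : r ≤ R) :
    ∫ x in closedAnnulus r R, ‖x‖ ^ (-(finrank ℝ E : ℝ)) ∂μ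
      = finrank ℝ E * μ.real (ball 0 1) * Real.log (R / r) := by
  have hd : 0 < finrank ℝ E := finrank_pos
  have hradial : ∫ y in Ioi (0 : ℝ), y ^ (finrank ℝ E - 1) • (Icc r R).indicator
      (fun ρ => ρ ^ (-(finrank ℝ E : ℝ))) y = Real.log (R / r) := by
    have hinv : ∀ y ∈ Icc r R, y ^ (finrank ℝ E - 1) * y ^ (-(finrank ℝ E : ℝ)) = y⁻¹ := by
      intro y hy
      rw [← Real.rpow_natCast, ← Real.rpow_add (hr.trans_le hy.1), Nat.cast_sub hd, Nat.cast_one,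
        show (finrank ℝ E : ℝ) - 1 + -(finrank ℝ E : ℝ) = -1 by ring, Real.rpow_neg_one]
    simp only [smul_eq_mul, ← indicator_mul_right _ fun y : ℝ => y ^ (finrank ℝ E - 1)]
    rw [integral_indicator measurableSet_Icc, Measure.restrict_restrict measurableSet_Icc,
      inter_eq_left.2 ((Icc_subset_Ioi_iff hrR).2 hr), setIntegral_congr_fun measurableSet_Icc hinv,
      integral_Icc_eq_integral_Ioc, ← intervalIntegral.integral_of_le hrR,
      integral_inv_of_pos hr (hr.trans_le hrR)]
  calc ∫ x in closedAnnulus r R, ‖x‖ ^ (-(finrank ℝ E : ℝ)) ∂μ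
      = ∫ x, (Icc r R).indicator (fun ρ => ρ ^ (-(finrank ℝ E : ℝ))) ‖x‖ ∂μ := by
        rw [← integral_indicator isClosed_closedAnnulus.measurableSet]; rfl
    _ = _ := by
        rw [integral_fun_norm_addHaar, hradial, nsmul_eq_mul, smul_eq_mul, mul_assoc]

lemma integral_closedAnnulus_exp_neg [Nontrivial E] {u : ℝ} (hu : 0 ≤ u) :
    ∫ x in closedAnnulus (Real.exp (-u)) 1, ‖x‖ ^ (-(finrank ℝ E : ℝ)) ∂μ
      = finrank ℝ E * μ.real (ball 0 1) * u := by
  rw [integral_closedAnnulus_norm_rpow_neg_finrank μ (Real.exp_pos _)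
    (Real.exp_le_one_iff.2 (neg_nonpos.2 hu)), one_div, ← Real.exp_neg, neg_neg, Real.log_exp]

lemma lintegral_closedAnnulus_exp_neg [Nontrivial E] {u : ℝ} (hu : 0 ≤ u) :
    ∫⁻ x in closedAnnulus (Real.exp (-u)) 1, ENNReal.ofReal (‖x‖ ^ (-(finrank ℝ E : ℝ))) ∂μ
      = ENNReal.ofReal (finrank ℝ E * μ.real (ball 0 1) * u) := by
  rw [← integral_closedAnnulus_exp_neg μ hu, ofReal_integral_eq_lintegral_ofReal
    ((continuousOn_norm_rpow_closedAnnulus (Real.exp_pos _) _).integrableOn_compact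
      isCompact_closedAnnulus)
    (ae_of_all _ fun x => Real.rpow_nonneg (norm_nonneg x) _)]

end Annulus

lemma eLpNorm_indicator_norm_rpow {E : Type*} [NormedAddCommGroup E] [MeasurableSpace E]
    {μ : Measure E} {S : Set E} (hS : MeasurableSet S) {p : ℝ} (hp : 0 < p) (s : ℝ) :
    eLpNorm (S.indicator fun x => ‖x‖ ^ s) (ENNReal.ofReal p) μ
      = (∫⁻ x in S, ENNReal.ofReal (‖x‖ ^ (s * p)) ∂μ) ^ (1 / p) := by
  rw [eLpNorm_indicator_eq_eLpNorm_restrict hS,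
    eLpNorm_eq_lintegral_rpow_enorm_toReal (by simpa using hp) ENNReal.ofReal_ne_top,
    ENNReal.toReal_ofReal hp.le]
  congr 1
  refine lintegral_congr fun x => ?_
  rw [Real.enorm_of_nonneg (by positivity), ENNReal.ofReal_rpow_of_nonneg (by positivity) hp.le,
    ← Real.rpow_mul (norm_nonneg x)]

lemma Real.rpow_le_max_of_mem_Icc {l u x : ℝ} (hl : 0 < l) (hx : x ∈ Icc l u) (t : ℝ) :
    x ^ t ≤ max (l ^ t) (u ^ t) := by
  rcases le_total 0 t with ht | ht
  · exact le_max_of_le_right (Real.rpow_le_rpow (hl.le.trans hx.1) hx.2 ht)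
  · exact le_max_of_le_left (Real.rpow_le_rpow_of_nonpos hl hx.1 ht)

lemma norm_sub_mem_Icc_one_four {E : Type*} [SeminormedAddCommGroup E] {x y : E}
    (hx : ‖x‖ ≤ 1) (hy : ‖y‖ ∈ Icc (2 : ℝ) 3) : ‖x - y‖ ∈ Icc (1 : ℝ) 4 := by
  have h₁ := norm_sub_norm_le y x
  have h₂ := norm_sub_le x y
  rw [norm_sub_rev] at h₁
  constructor <;> linarith [hy.1, hy.2]

lemma exists_mul_rpow_lt_mul_rpow {c C α β : ℝ} (hc : 0 < c) (hβα : β < α) :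
    ∃ w > 0, C * w ^ β < c * w ^ α := by
  obtain ⟨w, hw, hw0⟩ := ((tendsto_rpow_atTop (sub_pos.2 hβα)).eventually_gt_atTop (C / c)
    |>.and (eventually_gt_atTop 0)).exists
  refine ⟨w, hw0, ?_⟩
  rw [Real.rpow_sub hw0, div_lt_iff₀ hc, div_mul_eq_mul_div, lt_div_iff₀ (by positivity)] at hw
  linarith

lemma not_forall_ofReal_mul_rpow_le {c σ α β : ℝ} {C : ℝ≥0∞} (hc : 0 < c) (hσ : 0 < σ)
    (hβα : β < α) (hC : C ≠ ⊤) :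
    ¬ ∀ u ≥ 0, ENNReal.ofReal (c * (σ * u) ^ α) ≤ C * ENNReal.ofReal (σ * u) ^ β := by
  intro h
  obtain ⟨w, hw, hlt⟩ := exists_mul_rpow_lt_mul_rpow (C := C.toReal) hc hβα
  have hle := ENNReal.toReal_mono (ENNReal.mul_ne_top hC (by finiteness))
    (h (w / σ) (by positivity))
  rw [mul_div_cancel₀ _ hσ.ne', ENNReal.toReal_mul, ← ENNReal.toReal_rpow,
    ENNReal.toReal_ofReal hw.le, ENNReal.toReal_ofReal (by positivity)] at hle
  exact lt_irrefl _ (hle.trans_lt hlt)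

section Operator

variable {E : Type*} [NormedAddCommGroup E] [MeasurableSpace E] (μ : Measure E) (a b t : ℝ)

/-- `t` stands for the exponent `d - (a + b)` of `‖x - y‖`. -/
def nirenbergWalkerOp (φ : E → ℝ) (x : E) : ℝ :=
  ∫ y, φ y / (‖x‖ ^ a * ‖x - y‖ ^ t * ‖y‖ ^ b) ∂μ

def NirenbergWalkerBounded (p : ℝ) (C : ℝ≥0∞) : Prop :=
  ∀ φ : E → ℝ, Measurable φ → (∀ x, 0 ≤ φ x) → MemLp φ (ENNReal.ofReal p) μ →
    eLpNorm (nirenbergWalkerOp μ a b t φ) (ENNReal.ofReal p) μ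
      ≤ C * eLpNorm φ (ENNReal.ofReal p) μ

variable {μ a b t}

lemma nirenbergWalkerOp_nonneg {φ : E → ℝ} (hφ : ∀ y, 0 ≤ φ y) (x : E) :
    0 ≤ nirenbergWalkerOp μ a b t φ x :=
  integral_nonneg fun y => div_nonneg (hφ y) (by positivity)

lemma setIntegral_le_nirenbergWalkerOp [OpensMeasurableSpace E] [IsLocallyFiniteMeasure μ]
    {S : Set E} (hS : IsCompact S) {x : E} (hx : x ≠ 0) (hSx : ∀ y ∈ S, y ≠ 0 ∧ y ≠ x)
    {φ g : E → ℝ} (hφ : ContinuousOn φ S) (hg : IntegrableOn g S μ)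
    (hgφ : ∀ y ∈ S, g y ≤ φ y / (‖x‖ ^ a * ‖x - y‖ ^ t * ‖y‖ ^ b)) :
    ∫ y in S, g y ∂μ ≤ nirenbergWalkerOp μ a b t (S.indicator φ) x := by
  have hpos : ∀ y ∈ S, 0 < ‖x‖ ^ a * ‖x - y‖ ^ t * ‖y‖ ^ b := fun y hy => by
    have hxy := norm_pos_iff.2 (sub_ne_zero.2 (hSx y hy).2.symm)
    have hy0 := norm_pos_iff.2 (hSx y hy).1
    have hx0 := norm_pos_iff.2 hx
    positivity
  have hcont : ContinuousOn (fun y => ‖x‖ ^ a * ‖x - y‖ ^ t * ‖y‖ ^ b) S := by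
    refine (continuousOn_const.mul (ContinuousOn.rpow_const (by fun_prop) fun y hy => ?_)).mul
      (ContinuousOn.rpow_const (by fun_prop) fun y hy => ?_)
    · exact Or.inl (norm_ne_zero_iff.2 (sub_ne_zero.2 (hSx y hy).2.symm))
    · exact Or.inl (norm_ne_zero_iff.2 (hSx y hy).1)
  have hind : (fun y => S.indicator φ y / (‖x‖ ^ a * ‖x - y‖ ^ t * ‖y‖ ^ b))
      = S.indicator fun y => φ y / (‖x‖ ^ a * ‖x - y‖ ^ t * ‖y‖ ^ b) := by
    ext y
    by_cases hy : y ∈ S <;> simp [hy]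
  rw [nirenbergWalkerOp, hind, integral_indicator hS.measurableSet]
  exact setIntegral_mono_on hg ((hφ.div hcont fun y hy => (hpos y hy).ne').integrableOn_compact hS)
    hS.measurableSet hgφ

end Operator

section Necessity

variable {E : Type*} [NormedAddCommGroup E] [NormedSpace ℝ E] [FiniteDimensional ℝ E]
  [MeasurableSpace E] [BorelSpace E] {μ : Measure E} [μ.IsAddHaarMeasure] {a b t p : ℝ}

variable (μ a b t) in
lemma exists_mul_rpow_le_nirenbergWalkerOp_indicator [Nontrivial E] :
    ∃ c > 0, ∀ x : E, 0 < ‖x‖ → ‖x‖ ≤ 1 →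
      c * ‖x‖ ^ (-a) ≤ nirenbergWalkerOp μ a b t ((closedAnnulus 2 3).indicator fun _ => 1) x := by
  set C : ℝ := max (1 ^ t) (4 ^ t) * max (2 ^ b) (3 ^ b)
  have hC : 0 < C := by positivity
  refine ⟨μ.real (closedAnnulus 2 3) / C,
    div_pos (measureReal_closedAnnulus_pos μ (by norm_num) (by norm_num)) hC,
    fun x hx0 hx1 => ?_⟩
  have hxa : 0 < ‖x‖ ^ a := by positivity
  calc μ.real (closedAnnulus 2 3) / C * ‖x‖ ^ (-a)
      = ∫ _ in closedAnnulus 2 3, (‖x‖ ^ a * C)⁻¹ ∂μ := by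
        rw [setIntegral_const, smul_eq_mul, Real.rpow_neg (norm_nonneg x)]
        field_simp
    _ ≤ _ := by
        refine setIntegral_le_nirenbergWalkerOp isCompact_closedAnnulus (norm_pos_iff.1 hx0)
          (fun y hy => ⟨?_, ?_⟩) continuousOn_const
          (integrableOn_const isCompact_closedAnnulus.measure_lt_top.ne) fun y hy => ?_
        · exact norm_pos_iff.1 (norm_pos_of_mem_closedAnnulus two_pos hy)
        · rintro rfl
          linarith [hy.1]
        · have hxy := norm_sub_mem_Icc_one_four hx1 hy
          have hxy0 : 0 < ‖x - y‖ := one_pos.trans_le hxy.1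
          have hy0 : 0 < ‖y‖ := norm_pos_of_mem_closedAnnulus two_pos hy
          rw [one_div, mul_assoc]
          gcongr
          exact mul_le_mul (Real.rpow_le_max_of_mem_Icc one_pos hxy t)
            (Real.rpow_le_max_of_mem_Icc two_pos hy b) (by positivity) (by positivity)

lemma exists_ofReal_mul_rpow_le_eLpNorm_nirenbergWalkerOp_indicator [Nontrivial E] (hp : 0 < p)
    (ha : (finrank ℝ E : ℝ) ≤ a * p) :
    ∃ c > 0, ∀ u ≥ 0, ENNReal.ofReal (c * (finrank ℝ E * μ.real (ball 0 1) * u) ^ (1 / p))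
      ≤ eLpNorm (nirenbergWalkerOp μ a b t ((closedAnnulus 2 3).indicator fun _ => 1))
          (ENNReal.ofReal p) μ := by
  obtain ⟨c, hc, hK⟩ := exists_mul_rpow_le_nirenbergWalkerOp_indicator μ a b t
  refine ⟨c, hc, fun u hu => ?_⟩
  set A : Set E := closedAnnulus (Real.exp (-u)) 1
  have hA : MeasurableSet A := isClosed_closedAnnulus.measurableSet
  calc ENNReal.ofReal (c * (finrank ℝ E * μ.real (ball 0 1) * u) ^ (1 / p))
      = ‖c‖ₑ * (∫⁻ x in A, ENNReal.ofReal (‖x‖ ^ (-(finrank ℝ E : ℝ))) ∂μ) ^ (1 / p) := by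
        have hσ := finrank_mul_measureReal_ball_pos μ
        rw [lintegral_closedAnnulus_exp_neg μ hu, Real.enorm_of_nonneg hc.le,
          ENNReal.ofReal_mul hc.le, ENNReal.ofReal_rpow_of_nonneg (by positivity) (by positivity)]
    _ ≤ ‖c‖ₑ * (∫⁻ x in A, ENNReal.ofReal (‖x‖ ^ (-a * p)) ∂μ) ^ (1 / p) := by
        refine mul_le_mul_right (ENNReal.rpow_le_rpow (setLIntegral_mono (by fun_prop)
          fun x hx => ENNReal.ofReal_le_ofReal ?_) (by positivity)) _
        exact Real.rpow_le_rpow_of_exponent_ge (norm_pos_of_mem_closedAnnulus (Real.exp_pos _) hx)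
          hx.2 (by linarith)
    _ = eLpNorm (c • A.indicator fun x => ‖x‖ ^ (-a)) (ENNReal.ofReal p) μ := by
        rw [eLpNorm_const_smul, eLpNorm_indicator_norm_rpow hA hp]
    _ ≤ _ := by
        refine eLpNorm_mono_real fun x => ?_
        by_cases hx : x ∈ A
        · rw [Pi.smul_apply, indicator_of_mem hx, smul_eq_mul, Real.norm_of_nonneg (by positivity)]
          exact hK x (norm_pos_of_mem_closedAnnulus (Real.exp_pos _) hx) hx.2
        · rw [Pi.smul_apply, indicator_of_notMem hx, smul_zero, norm_zero]
          exact nirenbergWalkerOp_nonneg (indicator_nonneg fun _ _ => zero_le_one) x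

lemma NirenbergWalkerBounded.mul_lt_finrank [Nontrivial E] {C : ℝ≥0∞}
    (h : NirenbergWalkerBounded μ a b t p C) (hp : 0 < p) (hC : C ≠ ⊤) :
    a * p < finrank ℝ E := by
  by_contra! ha
  obtain ⟨c, hc, hlower⟩ := exists_ofReal_mul_rpow_le_eLpNorm_nirenbergWalkerOp_indicator
    (μ := μ) (b := b) (t := t) hp ha
  have hA : MeasurableSet (closedAnnulus (E := E) 2 3) := isClosed_closedAnnulus.measurableSet
  have hφ : MemLp ((closedAnnulus (E := E) 2 3).indicator fun _ => (1 : ℝ)) (ENNReal.ofReal p) μ :=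
    memLp_indicator_const _ hA 1 (Or.inr isCompact_closedAnnulus.measure_lt_top.ne)
  have hupper := h _ (measurable_const.indicator hA) (indicator_nonneg fun _ _ => zero_le_one) hφ
  refine not_forall_ofReal_mul_rpow_le hc (finrank_mul_measureReal_ball_pos μ)
    (one_div_pos.2 hp) (ENNReal.mul_ne_top hC hφ.eLpNorm_ne_top) fun u hu => ?_
  rw [ENNReal.rpow_zero, mul_one]
  exact (hlower u hu).trans hupper

variable (μ a t) in
lemma exists_mul_le_nirenbergWalkerOp_indicator_rpow {s : ℝ} (hs : s - b ≤ -finrank ℝ E) :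
    ∃ c > 0, ∀ r > 0, ∀ x ∈ closedAnnulus (E := E) 2 3,
      c * ∫ y in closedAnnulus r 1, ‖y‖ ^ (-(finrank ℝ E : ℝ)) ∂μ
        ≤ nirenbergWalkerOp μ a b t ((closedAnnulus r 1).indicator fun y => ‖y‖ ^ s) x := by
  set C : ℝ := max (2 ^ a) (3 ^ a) * max (1 ^ t) (4 ^ t)
  have hC : 0 < C := by positivity
  refine ⟨C⁻¹, inv_pos.2 hC, fun r hr x hx => ?_⟩
  have hx0 : 0 < ‖x‖ := norm_pos_of_mem_closedAnnulus two_pos hx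
  rw [← integral_const_mul]
  refine setIntegral_le_nirenbergWalkerOp isCompact_closedAnnulus (norm_pos_iff.1 hx0)
    (fun y hy => ⟨norm_pos_iff.1 (norm_pos_of_mem_closedAnnulus hr hy), ?_⟩)
    (continuousOn_norm_rpow_closedAnnulus hr s)
    (((continuousOn_norm_rpow_closedAnnulus hr _).integrableOn_compact
      isCompact_closedAnnulus).const_mul _) fun y hy => ?_
  · rintro rfl
    linarith [hx.1, hy.2]
  have hy0 : 0 < ‖y‖ := norm_pos_of_mem_closedAnnulus hr hy
  have hxy : ‖x - y‖ ∈ Icc (1 : ℝ) 4 := by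
    rw [norm_sub_rev]
    exact norm_sub_mem_Icc_one_four hy.2 hx
  have hxy0 : 0 < ‖x - y‖ := one_pos.trans_le hxy.1
  have hD : ‖x‖ ^ a * ‖x - y‖ ^ t * ‖y‖ ^ b ≤ C * ‖y‖ ^ b := by
    gcongr
    exact mul_le_mul (Real.rpow_le_max_of_mem_Icc two_pos hx a)
      (Real.rpow_le_max_of_mem_Icc one_pos hxy t) (by positivity) (by positivity)
  calc C⁻¹ * ‖y‖ ^ (-(finrank ℝ E : ℝ)) ≤ C⁻¹ * ‖y‖ ^ (s - b) :=
        mul_le_mul_of_nonneg_left (Real.rpow_le_rpow_of_exponent_ge hy0 hy.2 hs) (by positivity)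
    _ = ‖y‖ ^ s / (C * ‖y‖ ^ b) := by
        rw [Real.rpow_sub hy0]
        field_simp
    _ ≤ ‖y‖ ^ s / (‖x‖ ^ a * ‖x - y‖ ^ t * ‖y‖ ^ b) := by gcongr

lemma exists_ofReal_mul_le_eLpNorm_nirenbergWalkerOp_indicator_rpow [Nontrivial E] (hp : 0 < p)
    {s : ℝ} (hs : s - b ≤ -finrank ℝ E) :
    ∃ c > 0, ∀ u ≥ 0, ENNReal.ofReal (c * (finrank ℝ E * μ.real (ball 0 1) * u))
      ≤ eLpNorm (nirenbergWalkerOp μ a b t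
          ((closedAnnulus (Real.exp (-u)) 1).indicator fun y => ‖y‖ ^ s)) (ENNReal.ofReal p) μ := by
  obtain ⟨c, hc, hK⟩ := exists_mul_le_nirenbergWalkerOp_indicator_rpow μ a t hs
  set B : Set E := closedAnnulus 2 3
  have hB : 0 < μ.real B := measureReal_closedAnnulus_pos μ (by norm_num) (by norm_num)
  refine ⟨c * μ.real B ^ (1 / p), by positivity, fun u hu => ?_⟩
  have hσ := finrank_mul_measureReal_ball_pos μ
  calc ENNReal.ofReal (c * μ.real B ^ (1 / p) * (finrank ℝ E * μ.real (ball 0 1) * u))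
      = eLpNorm (B.indicator fun _ => c * (finrank ℝ E * μ.real (ball 0 1) * u))
          (ENNReal.ofReal p) μ := by
        rw [eLpNorm_indicator_const isClosed_closedAnnulus.measurableSet (by simpa using hp)
          ENNReal.ofReal_ne_top, Real.enorm_of_nonneg (by positivity), ENNReal.toReal_ofReal hp.le,
          mul_right_comm, ENNReal.ofReal_mul (by positivity), ← ENNReal.ofReal_rpow_of_nonneg hB.le
          (by positivity), ofReal_measureReal isCompact_closedAnnulus.measure_lt_top.ne]
    _ ≤ _ := by
        refine eLpNorm_mono_real fun x => ?_
        by_cases hx : x ∈ B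
        · have hKx := hK (Real.exp (-u)) (Real.exp_pos _) x hx
          rw [integral_closedAnnulus_exp_neg μ hu] at hKx
          rwa [indicator_of_mem hx, Real.norm_of_nonneg (by positivity)]
        · rw [indicator_of_notMem hx, norm_zero]
          exact nirenbergWalkerOp_nonneg
            (indicator_nonneg fun y _ => Real.rpow_nonneg (norm_nonneg y) _) x

lemma eLpNorm_indicator_closedAnnulus_exp_neg [Nontrivial E] (hp : 0 < p) {u : ℝ} (hu : 0 ≤ u) :
    eLpNorm ((closedAnnulus (Real.exp (-u)) 1).indicator fun y : E => ‖y‖ ^ (-finrank ℝ E / p))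
      (ENNReal.ofReal p) μ = ENNReal.ofReal (finrank ℝ E * μ.real (ball 0 1) * u) ^ (1 / p) := by
  rw [eLpNorm_indicator_norm_rpow isClosed_closedAnnulus.measurableSet hp,
    div_mul_cancel₀ _ hp.ne', lintegral_closedAnnulus_exp_neg μ hu]

lemma NirenbergWalkerBounded.lt_finrank_sub_div [Nontrivial E] {C : ℝ≥0∞}
    (h : NirenbergWalkerBounded μ a b t p C) (hp : 1 < p) (hC : C ≠ ⊤) :
    b < finrank ℝ E - finrank ℝ E / p := by
  by_contra! hb
  have hp0 : 0 < p := one_pos.trans hp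
  obtain ⟨c, hc, hlower⟩ := exists_ofReal_mul_le_eLpNorm_nirenbergWalkerOp_indicator_rpow
    (μ := μ) (t := t) hp0 (s := -finrank ℝ E / p)
    (by rw [neg_div, neg_sub_left, neg_le_neg_iff]; exact sub_le_iff_le_add.1 hb)
  refine not_forall_ofReal_mul_rpow_le hc (finrank_mul_measureReal_ball_pos μ)
    ((div_lt_one hp0).2 hp) hC fun u hu => ?_
  set φ : E → ℝ := (closedAnnulus (Real.exp (-u)) 1).indicator fun y => ‖y‖ ^ (-finrank ℝ E / p)
  have hφm : Measurable φ :=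
    (measurable_norm.pow_const _).indicator isClosed_closedAnnulus.measurableSet
  have hφ := eLpNorm_indicator_closedAnnulus_exp_neg (μ := μ) hp0 hu
  have hφL : MemLp φ (ENNReal.ofReal p) μ := ⟨hφm.aestronglyMeasurable,
    hφ ▸ ENNReal.rpow_lt_top_of_nonneg (by positivity) ENNReal.ofReal_ne_top⟩
  rw [Real.rpow_one, ← hφ]
  exact (hlower u hu).trans
    (h φ hφm (indicator_nonneg fun y _ => Real.rpow_nonneg (norm_nonneg y) _) hφL)

end Necessity

theorem nirenberg_walker_necessity_general
    (d : ℕ) (hd : 1 ≤ d) (p q a b : ℝ) (hp : 1 < p) (hq : q = p / (p - 1))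
    (M : ℝ)
    (hbound : ∀ φ : EuclideanSpace ℝ (Fin d) → ℝ, Measurable φ → (∀ x, 0 ≤ φ x) →
      MemLp φ (ENNReal.ofReal p) volume →
      eLpNorm
        (fun x => ∫ y, φ y / (‖x‖ ^ a * ‖x - y‖ ^ ((d : ℝ) - (a + b)) * ‖y‖ ^ b))
        (ENNReal.ofReal p) volume
        ≤ ENNReal.ofReal M * eLpNorm φ (ENNReal.ofReal p) volume) :
    a < d / p ∧ b < d / q := by
  have hdim : finrank ℝ (EuclideanSpace ℝ (Fin d)) = d := finrank_euclideanSpace_fin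
  have : Nontrivial (EuclideanSpace ℝ (Fin d)) :=
    Module.nontrivial_of_finrank_pos (R := ℝ) (by omega)
  have h : NirenbergWalkerBounded volume a b ((d : ℝ) - (a + b)) p (ENNReal.ofReal M) := hbound
  have hp0 : 0 < p := one_pos.trans hp
  have hdq : (d : ℝ) / q = d - d / p := by
    rw [hq]
    field_simp [(sub_pos.2 hp).ne']
  constructor
  · rw [lt_div_iff₀ hp0, ← hdim]
    exact h.mul_lt_finrank hp0 ENNReal.ofReal_ne_top
  · rw [hdq, ← hdim]
    exact h.lt_finrank_sub_div hp ENNReal.ofReal_ne_top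

/-- **Nirenberg–Walker, necessity**: if `a + b > 0` and the integral operator with kernel
`k(x,y) = |x|^{-a} |x−y|^{-(d−(a+b))} |y|^{-b}` is bounded on `L^p(ℝ^d)` (on nonnegative
functions), then necessarily `a < d/p` and `b < d/q`, `q` the dual exponent of `p`. -/
theorem nirenberg_walker_necessity
    (d : ℕ) (hd : 1 ≤ d) (p q a b : ℝ) (hp : 1 < p) (hq : q = p / (p - 1))
    (hab : 0 < a + b) (M : ℝ) (hM : 0 < M)
    (hbound : ∀ φ : EuclideanSpace ℝ (Fin d) → ℝ, Measurable φ → (∀ x, 0 ≤ φ x) →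
      MemLp φ (ENNReal.ofReal p) volume →
      eLpNorm
        (fun x => ∫ y, φ y / (‖x‖ ^ a * ‖x - y‖ ^ ((d : ℝ) - (a + b)) * ‖y‖ ^ b))
        (ENNReal.ofReal p) volume
        ≤ ENNReal.ofReal M * eLpNorm φ (ENNReal.ofReal p) volume) :
    a < d / p ∧ b < d / q :=
  nirenberg_walker_necessity_general d hd p q a b hp hq M hbound
end
end

section
/- Let μ ∈ ℝ. Suppose f ∈ L^{2,μ−1}(ℝ³, ℂ⁴) and g is a measurable ℂ⁴-valued function such that both g and x ↦ ⟨x⟩^μ g(x) are locally integrable, and α·Df = g in the sense of distributions, i.e. for every φ ∈ C_c^∞(ℝ³, ℂ⁴), ∫⟨f(x), (α·Dφ)(x)⟩_{ℂ⁴} dx = ∫⟨g(x), φ(x)⟩_{ℂ⁴} dx. Then α·D(⟨·⟩^μ f) = −iμ(α·x)⟨x⟩^{μ−2} f + ⟨x⟩^μ g in the sense of distributions; that is, for every φ ∈ C_c^∞(ℝ³, ℂ⁴), ∫_{ℝ³} ⟨⟨x⟩^μ f(x), (α·Dφ)(x)⟩_{ℂ⁴} dx = ∫_{ℝ³} ⟨−iμ(α·x)⟨x⟩^{μ−2}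 f(x) + ⟨x⟩^μ g(x), φ(x)⟩_{ℂ⁴} dx. -/
open MeasureTheory Matrix

noncomputable section

/-- The three Dirac matrices `αⱼ = [[0, σⱼ],[σⱼ, 0]]`. -/
def diracAlpha : Fin 3 → Matrix (Fin 4) (Fin 4) ℂ
  | 0 => !![0,0,0,1; 0,0,1,0; 0,1,0,0; 1,0,0,0]
  | 1 => !![0,0,0,-Complex.I; 0,0,Complex.I,0; 0,-Complex.I,0,0; Complex.I,0,0,0]
  | 2 => !![0,0,1,0; 0,0,0,-1; 1,0,0,0; 0,-1,0,0]

/-- Matrix acting on a vector of `EuclideanSpace ℂ (Fin 4)`. -/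
def mulVec4 (M : Matrix (Fin 4) (Fin 4) ℂ) (v : EuclideanSpace ℂ (Fin 4)) :
    EuclideanSpace ℂ (Fin 4) :=
  (WithLp.equiv 2 (Fin 4 → ℂ)).symm (M.mulVec ((WithLp.equiv 2 (Fin 4 → ℂ)) v))

/-- `α·x = Σⱼ xⱼ αⱼ`. -/
def alphaDot (x : EuclideanSpace ℝ (Fin 3)) : Matrix (Fin 4) (Fin 4) ℂ :=
  ∑ j, (x j : ℂ) • diracAlpha j

/-- Japanese bracket `⟨x⟩ = (1+|x|²)^(1/2)`. -/
def jap (x : EuclideanSpace ℝ (Fin 3)) : ℝ := Real.sqrt (1 + ‖x‖ ^ 2)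

/-- `f ∈ L^{2,s}` iff `x ↦ ⟨x⟩^s f x` is square integrable. -/
def MemL2s (s : ℝ) (f : EuclideanSpace ℝ (Fin 3) → EuclideanSpace ℂ (Fin 4)) : Prop :=
  MemLp (fun x => jap x ^ s • f x) 2 volume

/-- Test function: `C_c^∞`. -/
def IsTestFun (φ : EuclideanSpace ℝ (Fin 3) → EuclideanSpace ℂ (Fin 4)) : Prop :=
  ContDiff ℝ (⊤ : ℕ∞) φ ∧ HasCompactSupport φ

/-- `j`-th partial derivative. -/
def pd (j : Fin 3) (φ : EuclideanSpace ℝ (Fin 3) → EuclideanSpace ℂ (Fin 4))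
    (x : EuclideanSpace ℝ (Fin 3)) : EuclideanSpace ℂ (Fin 4) :=
  fderiv ℝ φ x (EuclideanSpace.single j 1)

/-- `(α·D)φ = Σⱼ αⱼ(−i ∂ⱼ φ)`. -/
def alphaD (φ : EuclideanSpace ℝ (Fin 3) → EuclideanSpace ℂ (Fin 4))
    (x : EuclideanSpace ℝ (Fin 3)) : EuclideanSpace ℂ (Fin 4) :=
  ∑ j, mulVec4 (diracAlpha j) ((-Complex.I) • pd j φ x)

/-- `(α·D + Q) f = 0` in the sense of distributions. -/
def DiracEqZero (Q : EuclideanSpace ℝ (Fin 3) → Matrix (Fin 4) (Fin 4) ℂ)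
    (f : EuclideanSpace ℝ (Fin 3) → EuclideanSpace ℂ (Fin 4)) : Prop :=
  ∀ φ, IsTestFun φ →
    ∫ x, ((inner ℂ (f x) (alphaD φ x) : ℂ) + (inner ℂ (mulVec4 (Q x) (f x)) (φ x) : ℂ)) = 0

/-- The integral operator `A`. -/
def opA (f : EuclideanSpace ℝ (Fin 3) → EuclideanSpace ℂ (Fin 4))
    (x : EuclideanSpace ℝ (Fin 3)) : EuclideanSpace ℂ (Fin 4) :=
  ∫ y, ((Complex.I / (4 * (Real.pi : ℂ))) * ((‖x - y‖ : ℂ) ^ 3)⁻¹) •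
    mulVec4 (alphaDot (x - y)) (f y)

section Aux

local notation "E3" => EuclideanSpace ℝ (Fin 3)
local notation "E4" => EuclideanSpace ℂ (Fin 4)

lemma base_pos (x : E3) : (0:ℝ) < 1 + ‖x‖ ^ 2 := by positivity

lemma jap_pos (x : E3) : 0 < jap x := Real.sqrt_pos.2 (base_pos x)

lemma jap_rpow (x : E3) (s : ℝ) : jap x ^ s = (1 + ‖x‖ ^ 2) ^ (s / 2) := by
  rw [jap, Real.sqrt_eq_rpow, ← Real.rpow_mul (base_pos x).le]
  congr 1
  ring

lemma contDiff_japPow (s : ℝ) : ContDiff ℝ (⊤ : ℕ∞) (fun x : E3 => jap x ^ s) := by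
  have h : (fun x : E3 => jap x ^ s) = fun x : E3 => (1 + ‖x‖ ^ 2) ^ (s / 2) :=
    funext fun x => jap_rpow x s
  rw [h]
  exact (contDiff_const.add (contDiff_norm_sq ℝ)).rpow_const_of_ne
    (fun x => (base_pos x).ne')

lemma continuous_japPow (s : ℝ) : Continuous (fun x : E3 => jap x ^ s) :=
  (contDiff_japPow s).continuous

lemma hasFDerivAt_japPow (s : ℝ) (x : E3) :
    HasFDerivAt (fun y : E3 => jap y ^ s)
      ((s * jap x ^ (s - 2)) • (innerSL ℝ x : E3 →L[ℝ] ℝ)) x := by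
  have h1 : HasFDerivAt (fun y : E3 => 1 + ‖y‖ ^ 2)
      ((2:ℕ) • (innerSL ℝ x : E3 →L[ℝ] ℝ)) x :=
    ((hasStrictFDerivAt_norm_sq x).hasFDerivAt).const_add 1
  have h2 := h1.rpow_const (p := s / 2) (Or.inl (base_pos x).ne')
  have h3 : (fun y : E3 => jap y ^ s) = fun y : E3 => (1 + ‖y‖ ^ 2) ^ (s / 2) :=
    funext fun y => jap_rpow y s
  have h4 : jap x ^ (s - 2) = (1 + ‖x‖ ^ 2) ^ (s / 2 - 1) := by
    rw [jap_rpow]; congr 1; ring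
  rw [h3, h4]
  refine h2.congr_fderiv ?_
  ext v
  simp only [ContinuousLinearMap.smul_apply, smul_eq_mul, nsmul_eq_mul]
  push_cast
  ring

lemma pd_jap_smul (s : ℝ) {φ : E3 → E4} (hφ : ContDiff ℝ (⊤ : ℕ∞) φ) (j : Fin 3) (x : E3) :
    pd j (fun y => jap y ^ s • φ y) x
      = (s * jap x ^ (s - 2) * x j) • φ x + jap x ^ s • pd j φ x := by
  have hφx : HasFDerivAt φ (fderiv ℝ φ x) x :=
    (hφ.differentiable (by simp) x).hasFDerivAt
  have h : HasFDerivAt (fun y => jap y ^ s • φ y) _ x := (hasFDerivAt_japPow s x).smul hφx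
  unfold pd
  rw [h.fderiv]
  have hin : (innerSL ℝ x : E3 →L[ℝ] ℝ) (EuclideanSpace.single j (1:ℝ)) = x j := by
    simp [EuclideanSpace.inner_single_right]
  simp only [ContinuousLinearMap.add_apply, ContinuousLinearMap.smul_apply,
    ContinuousLinearMap.smulRight_apply, hin, smul_eq_mul]
  rw [add_comm]

lemma isTestFun_jap_smul (s : ℝ) {φ : E3 → E4} (hφ : IsTestFun φ) :
    IsTestFun (fun y => jap y ^ s • φ y) := by
  refine ⟨?_, ?_⟩
  swap
  · refine hφ.2.mono ?_
    intro x hx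
    simp only [Function.mem_support, Ne] at hx ⊢
    intro h0
    exact hx (by simp [h0])
  exact ContDiff.smul (contDiff_japPow s) hφ.1

lemma mulVec4_smul (M : Matrix (Fin 4) (Fin 4) ℂ) (c : ℂ) (v : E4) :
    mulVec4 M (c • v) = c • mulVec4 M v := by
  simp [mulVec4, Matrix.mulVec_smul]

lemma real_smul_E4 (r : ℝ) (v : E4) : r • v = (r : ℂ) • v := by
  ext i
  simp [Complex.real_smul]

lemma mulVec4_real_smul (M : Matrix (Fin 4) (Fin 4) ℂ) (r : ℝ) (v : E4) :
    mulVec4 M (r • v) = r • mulVec4 M v := by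
  rw [real_smul_E4, real_smul_E4, mulVec4_smul]

lemma mulVec4_add (M : Matrix (Fin 4) (Fin 4) ℂ) (u v : E4) :
    mulVec4 M (u + v) = mulVec4 M u + mulVec4 M v := by
  simp [mulVec4, Matrix.mulVec_add]

lemma mulVec4_zero (M : Matrix (Fin 4) (Fin 4) ℂ) : mulVec4 M 0 = 0 := by
  simp [mulVec4, Matrix.mulVec_zero]

lemma alphaDot_mulVec4 (x : E3) (v : E4) :
    mulVec4 (alphaDot x) v = ∑ j, (x j : ℂ) • mulVec4 (diracAlpha j) v := by
  have key : (alphaDot x) *ᵥ ((WithLp.equiv 2 (Fin 4 → ℂ)) v)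
      = ∑ j, (x j : ℂ) • (diracAlpha j *ᵥ ((WithLp.equiv 2 (Fin 4 → ℂ)) v)) := by
    funext i
    simp only [alphaDot, Matrix.mulVec, dotProduct, Matrix.sum_apply,
      Matrix.smul_apply, Finset.sum_mul, smul_eq_mul, Finset.sum_apply,
      Pi.smul_apply]
    rw [Finset.sum_comm]
    refine Finset.sum_congr rfl fun j _ => ?_
    rw [Finset.mul_sum]
    refine Finset.sum_congr rfl fun k _ => ?_
    ring
  have : mulVec4 (alphaDot x) v
      = (WithLp.linearEquiv 2 ℂ (Fin 4 → ℂ)).symm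
          (∑ j, (x j : ℂ) • (diracAlpha j *ᵥ ((WithLp.equiv 2 (Fin 4 → ℂ)) v))) := by
    rw [mulVec4, key]; rfl
  rw [this, map_sum]
  refine Finset.sum_congr rfl fun j _ => ?_
  rw [_root_.map_smul]
  rfl

lemma diracAlpha_conjTranspose (j : Fin 3) : (diracAlpha j)ᴴ = diracAlpha j := by
  fin_cases j <;>
    · ext i k
      fin_cases i <;> fin_cases k <;>
        simp [diracAlpha, Matrix.conjTranspose_apply, Complex.conj_I,
          Matrix.vecHead, Matrix.vecTail]

lemma alphaDot_conjTranspose (x : E3) : (alphaDot x)ᴴ = alphaDot x := by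
  unfold alphaDot
  rw [Matrix.conjTranspose_sum]
  refine Finset.sum_congr rfl fun j _ => ?_
  rw [Matrix.conjTranspose_smul, diracAlpha_conjTranspose]
  congr 1
  simp [Complex.conj_ofReal]

lemma inner_mulVec4_symm {M : Matrix (Fin 4) (Fin 4) ℂ} (hM : Mᴴ = M) (u v : E4) :
    (inner ℂ u (mulVec4 M v) : ℂ) = inner ℂ (mulVec4 M u) v := by
  simp only [EuclideanSpace.inner_eq_star_dotProduct, mulVec4, Equiv.apply_symm_apply]
  show (M *ᵥ v.ofLp) ⬝ᵥ star u.ofLp = v.ofLp ⬝ᵥ star (M *ᵥ u.ofLp)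
  rw [Matrix.star_mulVec, hM, dotProduct_comm v.ofLp, ← Matrix.dotProduct_mulVec, dotProduct_comm]

lemma inner_real_smul_left (r : ℝ) (u v : E4) :
    (inner ℂ (r • u) v : ℂ) = (r : ℂ) * inner ℂ u v := by
  rw [real_smul_E4, inner_smul_left, Complex.conj_ofReal]

lemma inner_real_smul_right (r : ℝ) (u v : E4) :
    (inner ℂ u (r • v) : ℂ) = (r : ℂ) * inner ℂ u v := by
  rw [real_smul_E4, inner_smul_right]

lemma alphaD_jap_smul (s : ℝ) {φ : E3 → E4} (hφ : ContDiff ℝ (⊤ : ℕ∞) φ) (x : E3) :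
    alphaD (fun y => jap y ^ s • φ y) x
      = jap x ^ s • alphaD φ x
        + ((-Complex.I) * (s : ℂ) * ((jap x ^ (s - 2) : ℝ) : ℂ)) •
            mulVec4 (alphaDot x) (φ x) := by
  unfold alphaD
  have step : ∀ j : Fin 3,
      mulVec4 (diracAlpha j) ((-Complex.I) • pd j (fun y => jap y ^ s • φ y) x)
        = jap x ^ s • mulVec4 (diracAlpha j) ((-Complex.I) • pd j φ x)
          + (((-Complex.I) * (s : ℂ) * ((jap x ^ (s - 2) : ℝ) : ℂ)) * (x j : ℂ)) •
              mulVec4 (diracAlpha j) (φ x) := by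
    intro j
    rw [pd_jap_smul s hφ j x, smul_add, mulVec4_add]
    rw [add_comm]
    congr 1
    · -- the φ-derivative term
      rw [smul_comm (-Complex.I) (jap x ^ s), mulVec4_real_smul]
    · -- the weight-derivative term
      rw [real_smul_E4 (s * jap x ^ (s - 2) * x j), smul_smul, mulVec4_smul]
      congr 1
      push_cast
      ring
  rw [Finset.sum_congr rfl fun j _ => step j, Finset.sum_add_distrib,
    ← Finset.smul_sum]
  congr 1
  rw [alphaDot_mulVec4, Finset.smul_sum]
  refine Finset.sum_congr rfl fun j _ => ?_
  rw [smul_smul]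

lemma continuous_mulVec4 {M : E3 → Matrix (Fin 4) (Fin 4) ℂ} {u : E3 → E4}
    (hM : Continuous M) (hu : Continuous u) :
    Continuous fun x => mulVec4 (M x) (u x) := by
  unfold mulVec4
  exact (PiLp.continuous_toLp _ _).comp
    (hM.matrix_mulVec ((PiLp.continuous_ofLp _ _).comp hu))

lemma continuous_alphaDot : Continuous alphaDot := by
  unfold alphaDot
  refine continuous_finset_sum _ fun j _ => ?_
  have hcoord : Continuous fun x : E3 => x j :=
    (continuous_apply j).comp (PiLp.continuous_ofLp _ _)
  exact (Complex.continuous_ofReal.comp hcoord).smul continuous_const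

lemma continuous_alphaD {φ : E3 → E4} (hφ : ContDiff ℝ (⊤ : ℕ∞) φ) : Continuous (alphaD φ) := by
  unfold alphaD
  refine continuous_finset_sum _ fun j _ => ?_
  have hpd : Continuous fun x => pd j φ x := by
    unfold pd
    exact (hφ.continuous_fderiv (by simp)).clm_apply continuous_const
  exact continuous_mulVec4 continuous_const (Continuous.const_smul hpd (-Complex.I) : Continuous fun x => -Complex.I • pd j φ x)

lemma hasCompactSupport_alphaD {φ : E3 → E4} (hφc : HasCompactSupport φ) :
    HasCompactSupport (alphaD φ) := by
  refine (hφc.fderiv (𝕜 := ℝ)).mono ?_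
  intro x hx
  simp only [Function.mem_support, Ne] at hx ⊢
  intro h0
  apply hx
  simp [alphaD, pd, h0, mulVec4_zero]

lemma integrable_inner_L2 {u v : E3 → E4} (hu : MemLp u 2 (volume : Measure (EuclideanSpace ℝ (Fin 3)))) (hv : MemLp v 2 volume) :
    Integrable (fun x => (inner ℂ (u x) (v x) : ℂ)) volume := by
  have h := MeasureTheory.L2.integrable_inner (𝕜 := ℂ) (hu.toLp u) (hv.toLp v)
  apply h.congr
  filter_upwards [hu.coeFn_toLp, hv.coeFn_toLp] with x h1 h2
  rw [h1, h2]

lemma integrable_inner_loc {u v : E3 → E4}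
    (hu : LocallyIntegrable u (volume : Measure (EuclideanSpace ℝ (Fin 3))))
    (hv : Continuous v) (hv' : HasCompactSupport v) :
    Integrable (fun x => (inner ℂ (u x) (v x) : ℂ)) volume := by
  obtain ⟨C, hC⟩ := hv.bounded_above_of_compact_support hv'
  have hmeas : AEStronglyMeasurable (fun x => (inner ℂ (u x) (v x) : ℂ)) volume :=
    hu.aestronglyMeasurable.inner hv.aestronglyMeasurable
  have hK : IsCompact (tsupport v) := hv'
  have hind : Integrable ((tsupport v).indicator fun x => C * ‖u x‖) volume := by
    rw [integrable_indicator_iff hK.measurableSet]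
    exact ((hu.integrableOn_isCompact hK).norm).const_mul C
  refine hind.mono' hmeas (Filter.Eventually.of_forall fun x => ?_)
  by_cases hx : x ∈ tsupport v
  · rw [Set.indicator_of_mem hx]
    calc ‖(inner ℂ (u x) (v x) : ℂ)‖ ≤ ‖u x‖ * ‖v x‖ := norm_inner_le_norm _ _
      _ ≤ ‖u x‖ * C := by
          have := hC x
          exact mul_le_mul_of_nonneg_left this (norm_nonneg _)
      _ = C * ‖u x‖ := mul_comm _ _
  · rw [Set.indicator_of_notMem hx, image_eq_zero_of_notMem_tsupport hx]
    simp

end Aux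

/-- Weighted Leibniz rule for `α·D`: if `f ∈ L^{2,μ−1}`, `g` and `⟨·⟩^μ g` are locally
integrable, and `α·Df = g` distributionally, then
`α·D(⟨·⟩^μ f) = −iμ(α·x)⟨x⟩^{μ−2} f + ⟨x⟩^μ g` in the sense of distributions. -/
theorem alphaD_weighted_leibniz (μ : ℝ)
    (f g : EuclideanSpace ℝ (Fin 3) → EuclideanSpace ℂ (Fin 4))
    (hf : MemL2s (μ - 1) f)
    (hg : LocallyIntegrable g volume)
    (hg' : LocallyIntegrable (fun x => jap x ^ μ • g x) volume)
    (heq : ∀ φ, IsTestFun φ →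
      ∫ x, (inner ℂ (f x) (alphaD φ x) : ℂ) = ∫ x, (inner ℂ (g x) (φ x) : ℂ)) :
    ∀ φ, IsTestFun φ →
      ∫ x, (inner ℂ (jap x ^ μ • f x) (alphaD φ x) : ℂ)
        = ∫ x, (inner ℂ
            ((-(Complex.I * (μ : ℂ))) • mulVec4 (alphaDot x) (jap x ^ (μ - 2) • f x)
              + jap x ^ μ • g x) (φ x) : ℂ) := by
  intro φ hφ
  obtain ⟨hφ1, hφ2⟩ := hφ
  have hψt : IsTestFun (fun y => jap y ^ μ • φ y) := isTestFun_jap_smul μ ⟨hφ1, hφ2⟩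
  have hf' : MemLp (fun x => jap x ^ (μ - 1) • f x) 2 volume := hf
  -- continuity and compact support of auxiliary functions
  have hαD : Continuous (alphaD φ) := continuous_alphaD hφ1
  have hαDc : HasCompactSupport (alphaD φ) := hasCompactSupport_alphaD hφ2
  have hu1 : Continuous fun x => jap x ^ (1:ℝ) • alphaD φ x :=
    (continuous_japPow 1).smul hαD
  have hu1c : HasCompactSupport fun x => jap x ^ (1:ℝ) • alphaD φ x := by
    refine hαDc.mono ?_
    intro x hx
    simp only [Function.mem_support, Ne] at hx ⊢
    intro h0
    exact hx (by simp [h0])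
  have hu1m : MemLp (fun x => jap x ^ (1:ℝ) • alphaD φ x) 2 volume :=
    hu1.memLp_of_hasCompactSupport hu1c
  have hMφ : Continuous fun x => mulVec4 (alphaDot x) (φ x) :=
    continuous_mulVec4 continuous_alphaDot hφ1.continuous
  have hu2 : Continuous fun x => jap x ^ (-1:ℝ) • mulVec4 (alphaDot x) (φ x) :=
    (continuous_japPow (-1)).smul hMφ
  have hu2c : HasCompactSupport fun x => jap x ^ (-1:ℝ) • mulVec4 (alphaDot x) (φ x) := by
    refine hφ2.mono ?_
    intro x hx
    simp only [Function.mem_support, Ne] at hx ⊢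
    intro h0
    exact hx (by simp [h0, mulVec4_zero])
  have hu2m : MemLp (fun x => jap x ^ (-1:ℝ) • mulVec4 (alphaDot x) (φ x)) 2 volume :=
    hu2.memLp_of_hasCompactSupport hu2c
  -- pointwise identities
  have e1 : ∀ x, (inner ℂ (jap x ^ μ • f x) (alphaD φ x) : ℂ)
      = inner ℂ (jap x ^ (μ - 1) • f x) (jap x ^ (1:ℝ) • alphaD φ x) := by
    intro x
    rw [inner_real_smul_left, inner_real_smul_left, inner_real_smul_right, ← mul_assoc,
      ← Complex.ofReal_mul, ← Real.rpow_add (jap_pos x)]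
    norm_num
  have e2 : ∀ x, (inner ℂ (f x)
        (((-Complex.I) * (μ:ℂ) * ((jap x ^ (μ - 2) : ℝ) : ℂ)) •
          mulVec4 (alphaDot x) (φ x)) : ℂ)
      = (-(Complex.I * (μ:ℂ))) *
          inner ℂ (jap x ^ (μ - 1) • f x) (jap x ^ (-1:ℝ) • mulVec4 (alphaDot x) (φ x)) := by
    intro x
    rw [inner_smul_right, inner_real_smul_left, inner_real_smul_right]
    rw [show μ - 2 = μ - 1 + -1 by ring, Real.rpow_add (jap_pos x), Complex.ofReal_mul]
    ring
  have e3 : ∀ x, (inner ℂ (f x) (alphaD (fun y => jap y ^ μ • φ y) x) : ℂ)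
      = inner ℂ (jap x ^ μ • f x) (alphaD φ x)
        + inner ℂ (f x) (((-Complex.I) * (μ:ℂ) * ((jap x ^ (μ - 2) : ℝ) : ℂ)) •
            mulVec4 (alphaDot x) (φ x)) := by
    intro x
    rw [alphaD_jap_smul μ hφ1 x, inner_add_right, inner_real_smul_right,
      inner_real_smul_left]
  have e4 : ∀ x, (inner ℂ (g x) (jap x ^ μ • φ x) : ℂ)
      = inner ℂ (jap x ^ μ • g x) (φ x) := by
    intro x
    rw [inner_real_smul_right, inner_real_smul_left]
  have e5 : ∀ x, (inner ℂ ((-(Complex.I * (μ:ℂ))) •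
          mulVec4 (alphaDot x) (jap x ^ (μ - 2) • f x) + jap x ^ μ • g x) (φ x) : ℂ)
      = -(inner ℂ (f x) (((-Complex.I) * (μ:ℂ) * ((jap x ^ (μ - 2) : ℝ) : ℂ)) •
            mulVec4 (alphaDot x) (φ x)) : ℂ)
        + inner ℂ (jap x ^ μ • g x) (φ x) := by
    intro x
    rw [inner_add_left]
    congr 1
    rw [inner_smul_left, mulVec4_real_smul, inner_real_smul_left,
      ← inner_mulVec4_symm (alphaDot_conjTranspose x), inner_smul_right,
      map_neg, _root_.map_mul, Complex.conj_I, Complex.conj_ofReal]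
    ring
  -- integrability
  have hA : Integrable (fun x => (inner ℂ (jap x ^ μ • f x) (alphaD φ x) : ℂ)) volume :=
    (integrable_inner_L2 hf' hu1m).congr
      (Filter.Eventually.of_forall fun x => (e1 x).symm)
  have hB : Integrable (fun x => (inner ℂ (f x)
      (((-Complex.I) * (μ:ℂ) * ((jap x ^ (μ - 2) : ℝ) : ℂ)) •
        mulVec4 (alphaDot x) (φ x)) : ℂ)) volume := by
    have h := (integrable_inner_L2 hf' hu2m).const_mul (-(Complex.I * (μ:ℂ)))
    exact h.congr (Filter.Eventually.of_forall fun x => (e2 x).symm)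
  have hC : Integrable (fun x => (inner ℂ (jap x ^ μ • g x) (φ x) : ℂ)) volume :=
    integrable_inner_loc hg' hφ1.continuous hφ2
  -- put everything together
  have key := heq _ hψt
  have h1 : ∫ x, (inner ℂ (f x) (alphaD (fun y => jap y ^ μ • φ y) x) : ℂ)
      = (∫ x, (inner ℂ (jap x ^ μ • f x) (alphaD φ x) : ℂ))
        + ∫ x, (inner ℂ (f x) (((-Complex.I) * (μ:ℂ) * ((jap x ^ (μ - 2) : ℝ) : ℂ)) •
            mulVec4 (alphaDot x) (φ x)) : ℂ) := by
    rw [integral_congr_ae (Filter.Eventually.of_forall e3)]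
    exact integral_add hA hB
  have h2 : ∫ x, (inner ℂ (g x) (jap x ^ μ • φ x) : ℂ)
      = ∫ x, (inner ℂ (jap x ^ μ • g x) (φ x) : ℂ) :=
    integral_congr_ae (Filter.Eventually.of_forall e4)
  have h3 : ∫ x, (inner ℂ ((-(Complex.I * (μ:ℂ))) •
        mulVec4 (alphaDot x) (jap x ^ (μ - 2) • f x) + jap x ^ μ • g x) (φ x) : ℂ)
      = -(∫ x, (inner ℂ (f x) (((-Complex.I) * (μ:ℂ) * ((jap x ^ (μ - 2) : ℝ) : ℂ)) •
            mulVec4 (alphaDot x) (φ x)) : ℂ))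
        + ∫ x, (inner ℂ (jap x ^ μ • g x) (φ x) : ℂ) := by
    have hBneg : Integrable (fun x => -(inner ℂ (f x)
        (((-Complex.I) * (μ:ℂ) * ((jap x ^ (μ - 2) : ℝ) : ℂ)) •
          mulVec4 (alphaDot x) (φ x)) : ℂ)) volume := hB.neg
    rw [integral_congr_ae (Filter.Eventually.of_forall e5), integral_add hBneg hC,
      integral_neg]
  rw [h3]
  rw [h1, h2] at key
  linear_combination key
end
end
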